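/- arXiv:2003.09708 — 3 statements merged into one kernel-verified Lean document; each statement's English description precedes it below -/
import Mathlib

section
/- Let ρ be a probability measure on (0,∞), let α, σ², P_max, W > 0 and ξ > 0. Define the truncated water-filling power p*(g) = min(max(ξ − σ²/(α g), 0), P_max) for g > 0. Then for every measurable function p : (0,∞) → ℝ with 0 ≤ p(g) ≤ P_max for all g, such that the average-rate constraint ∫ log(1 + (α g/σ²) p(g)) dρ(g) = ∫ log(1 + (α g/σ²) p*(g)) dρ(g) holds (both integrals being finite), one has ∫ p(g) dρ(g) ≥ ∫ p*(g) dρ(g). That is, the truncated water-filling policy minimizes the average transmit power among all power policies achieving the same average data rate. -/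
/-!
Lagrangian duality with multiplier `ξ`. For `c = α g / σ²` the function
`x ↦ x - ξ log (1 + c x)` is convex with derivative `1 - ξ c / (1 + c x)`, which vanishes at
`x = ξ - 1/c`; so its minimizer over `[0, P_max]` is the projection of `ξ - 1/c` onto that
interval, i.e. the water-filling value. Integrating this pointwise inequality against `ρ` and
cancelling the equal rate integrals compares the average powers.
-/

open MeasureTheory Set

lemma mul_clamp_sub_nonneg {a b x : ℝ} (y : ℝ) (hab : a ≤ b) (hx : x ∈ Icc a b) :
    0 ≤ (x - min (max y a) b) * (min (max y a) b - y) := by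
  rcases le_total y a with hya | hay
  · rw [max_eq_right hya, min_eq_left hab]
    exact mul_nonneg (by linarith [hx.1]) (by linarith)
  · rw [max_eq_left hay]
    rcases le_total y b with hyb | hby
    · rw [min_eq_left hyb, sub_self, mul_zero]
    · rw [min_eq_right hby]
      exact mul_nonneg_of_nonpos_of_nonpos (by linarith [hx.2]) (by linarith)

lemma Real.log_le_log_add_sub_div {a b : ℝ} (ha : 0 < a) (hb : 0 < b) :
    Real.log b ≤ Real.log a + (b - a) / a := by
  have h := Real.log_le_sub_one_of_pos (div_pos hb ha)
  rw [Real.log_div hb.ne' ha.ne'] at h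
  rw [sub_div, div_self ha.ne']
  linarith

/-- The policy `p*` at a fading state with gain-to-noise ratio `c = α g / σ²`. -/
noncomputable def truncWaterFilling (c ξ P : ℝ) : ℝ := min (max (ξ - c⁻¹) 0) P

lemma truncWaterFilling_mem_Icc (c ξ : ℝ) {P : ℝ} (hP : 0 ≤ P) :
    truncWaterFilling c ξ P ∈ Icc 0 P :=
  ⟨le_min (le_max_right _ _) hP, min_le_right _ _⟩

theorem truncWaterFilling_sub_mul_log_le {c ξ P x : ℝ} (hc : 0 < c) (hξ : 0 ≤ ξ)
    (hx : x ∈ Icc 0 P) :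
    truncWaterFilling c ξ P - ξ * Real.log (1 + c * truncWaterFilling c ξ P) ≤
      x - ξ * Real.log (1 + c * x) := by
  set xs := truncWaterFilling c ξ P
  have hxs : xs ∈ Icc 0 P := truncWaterFilling_mem_Icc c ξ (hx.1.trans hx.2)
  have hs : 0 < 1 + c * xs := by nlinarith [hxs.1]
  have hx' : 0 < 1 + c * x := by nlinarith [hx.1]
  have tangent := Real.log_le_log_add_sub_div hs hx'
  have projection : 0 ≤ (x - xs) * (xs - (ξ - c⁻¹)) :=
    mul_clamp_sub_nonneg (ξ - c⁻¹) (hx.1.trans hx.2) hx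
  have hgap : c * (xs - (ξ - c⁻¹)) = 1 + c * xs - ξ * c := by
    field_simp
    ring
  have kkt : ξ * ((1 + c * x - (1 + c * xs)) / (1 + c * xs)) ≤ x - xs := by
    rw [mul_div_assoc', div_le_iff₀ hs]
    have := mul_nonneg hc.le projection
    rw [mul_left_comm, hgap] at this
    linear_combination this
  have := mul_le_mul_of_nonneg_left tangent hξ
  rw [mul_add] at this
  linarith

theorem integral_le_integral_of_ae_sub_mul_le {α : Type*} [MeasurableSpace α] {μ : Measure α}
    {f g u v : α → ℝ} (ξ : ℝ) (hf : Integrable f μ) (hg : Integrable g μ)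
    (hu : Integrable u μ) (hv : Integrable v μ) (huv : ∫ x, u x ∂μ = ∫ x, v x ∂μ)
    (h : ∀ᵐ x ∂μ, f x - ξ * u x ≤ g x - ξ * v x) :
    ∫ x, f x ∂μ ≤ ∫ x, g x ∂μ := by
  have : ∫ x, (f x - ξ * u x) ∂μ ≤ ∫ x, (g x - ξ * v x) ∂μ :=
    integral_mono_ae (hf.sub (hu.const_mul ξ)) (hg.sub (hv.const_mul ξ)) h
  rw [integral_sub hf (hu.const_mul ξ), integral_sub hg (hv.const_mul ξ),
    integral_const_mul, integral_const_mul, huv] at this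
  linarith

theorem truncated_waterfilling_minimizes_power_general
    (ρ : Measure ℝ) [IsProbabilityMeasure ρ] (hρ : ρ (Set.Iic 0) = 0)
    (α σ2 Pmax ξ : ℝ) (hα : 0 < α) (hσ2 : 0 < σ2) (hPmax : 0 < Pmax)
    (hξ : 0 < ξ)
    (p : ℝ → ℝ) (hp_meas : Measurable p)
    (hp_bdd : ∀ g, 0 < g → 0 ≤ p g ∧ p g ≤ Pmax)
    (hint_p : Integrable (fun g => Real.log (1 + (α * g / σ2) * p g)) ρ)
    (hint_star : Integrable
      (fun g => Real.log (1 + (α * g / σ2) * min (max (ξ - σ2 / (α * g)) 0) Pmax)) ρ)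
    (hrate : ∫ g, Real.log (1 + (α * g / σ2) * p g) ∂ρ
        = ∫ g, Real.log (1 + (α * g / σ2) * min (max (ξ - σ2 / (α * g)) 0) Pmax) ∂ρ) :
    ∫ g, min (max (ξ - σ2 / (α * g)) 0) Pmax ∂ρ ≤ ∫ g, p g ∂ρ := by
  have hstar (g : ℝ) : min (max (ξ - σ2 / (α * g)) 0) Pmax
      = truncWaterFilling (α * g / σ2) ξ Pmax := by
    rw [truncWaterFilling, inv_div]
  have hpos : ∀ᵐ g ∂ρ, 0 < g :=
    (measure_eq_zero_iff_ae_notMem.1 hρ).mono fun _ hg => not_le.1 hg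
  have hint_pow_star : Integrable (fun g => min (max (ξ - σ2 / (α * g)) 0) Pmax) ρ :=
    .of_bound (by fun_prop : Measurable _).aestronglyMeasurable Pmax (.of_forall fun g => by
      rw [hstar, Real.norm_of_nonneg (truncWaterFilling_mem_Icc _ _ hPmax.le).1]
      exact (truncWaterFilling_mem_Icc _ _ hPmax.le).2)
  have hint_pow : Integrable p ρ :=
    .of_bound hp_meas.aestronglyMeasurable Pmax (hpos.mono fun g hg => by
      rw [Real.norm_of_nonneg (hp_bdd g hg).1]
      exact (hp_bdd g hg).2)
  refine integral_le_integral_of_ae_sub_mul_le ξ hint_pow_star hint_pow hint_star hint_p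
    hrate.symm (hpos.mono fun g hg => ?_)
  simp only [hstar]
  exact truncWaterFilling_sub_mul_log_le (div_pos (mul_pos hα hg) hσ2) hξ.le (hp_bdd g hg)

/-- **Proposition 1 (verification form).** The truncated water-filling policy
`p*(g) = min(max(ξ − σ²/(α g), 0), P_max)` minimizes the average transmit power among all
measurable power policies `p` with `0 ≤ p ≤ P_max` that achieve the same average data rate
`∫ log(1 + (α g/σ²) p(g)) dρ(g)`, for any probability measure `ρ` on `(0,∞)`. -/
theorem truncated_waterfilling_minimizes_power
    (ρ : Measure ℝ) [IsProbabilityMeasure ρ] (hρ : ρ (Set.Iic 0) = 0)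
    (α σ2 Pmax W ξ : ℝ) (hα : 0 < α) (hσ2 : 0 < σ2) (hPmax : 0 < Pmax)
    (hW : 0 < W) (hξ : 0 < ξ)
    (p : ℝ → ℝ) (hp_meas : Measurable p)
    (hp_bdd : ∀ g, 0 < g → 0 ≤ p g ∧ p g ≤ Pmax)
    (hint_p : Integrable (fun g => Real.log (1 + (α * g / σ2) * p g)) ρ)
    (hint_star : Integrable
      (fun g => Real.log (1 + (α * g / σ2) * min (max (ξ - σ2 / (α * g)) 0) Pmax)) ρ)
    (hrate : ∫ g, Real.log (1 + (α * g / σ2) * p g) ∂ρ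
        = ∫ g, Real.log (1 + (α * g / σ2) * min (max (ξ - σ2 / (α * g)) 0) Pmax) ∂ρ) :
    ∫ g, min (max (ξ - σ2 / (α * g)) 0) Pmax ∂ρ ≤ ∫ g, p g ∂ρ :=
  truncated_waterfilling_minimizes_power_general ρ hρ α σ2 Pmax ξ hα hσ2 hPmax hξ p hp_meas hp_bdd
    hint_p hint_star hrate
end

section
/- Let α, σ², W, ξ > 0. Then ∫_0^∞ W·log₂(1 + (α g/σ²)·max(ξ − σ²/(α g), 0))·e^{−g} dg = (W/ln 2)·E₁(σ²/(α ξ)), where E₁(x) = ∫_x^∞ e^{−t}/t dt. -/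
open MeasureTheory Set

/-- The exponential integral function `E₁(x) = ∫_x^∞ e^{−t}/t dt`. -/
noncomputable def expIntegralE1 (x : ℝ) : ℝ := ∫ t in Ioi x, Real.exp (-t) / t

/-!
With `c = σ²/(αξ)` the water-filling SNR gain `1 + (α g/σ²) p*(g)` equals `max (g/c) 1`, so the
rate vanishes below the cutoff `c` and equals `W log₂ (g/c)` above it. Integrating by parts with
`u = log (g/c)` (which vanishes at `c`) and `v = -e^{-g}` turns `∫_c^∞ log (g/c) e^{-g} dg` into
`∫_c^∞ e^{-g}/g dg = E₁(c)`.
-/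

open Real Filter Topology

lemma one_add_mul_max_sub_div_eq_max {α σ2 ξ g : ℝ} (hα : 0 < α) (hσ2 : 0 < σ2) (hg : 0 < g) :
    1 + (α * g / σ2) * max (ξ - σ2 / (α * g)) 0 = max (g / (σ2 / (α * ξ))) 1 := by
  rw [mul_max_of_nonneg _ _ (by positivity), mul_zero, ← max_add_add_left, add_zero]
  congr 1
  field_simp
  ring

lemma abs_log_div_mul_exp_neg_le {c x : ℝ} (hc : 0 < c) (hx : c ≤ x) :
    |log (x / c) * exp (-x)| ≤ c⁻¹ * (x * exp (-x)) := by
  have hlog : 0 ≤ log (x / c) := log_nonneg ((one_le_div hc).mpr hx)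
  rw [abs_mul, abs_of_nonneg hlog, abs_of_pos (exp_pos _), ← mul_assoc, ← div_eq_inv_mul]
  gcongr
  exact log_le_self (div_pos (hc.trans_le hx) hc).le

lemma integrableOn_log_div_mul_exp_neg {c : ℝ} (hc : 0 < c) :
    IntegrableOn (fun x => log (x / c) * exp (-x)) (Ioi c) := by
  have hmul : IntegrableOn (fun x : ℝ => x * exp (-x)) (Ioi c) := by
    simpa using (integrableOn_rpow_mul_exp_neg_rpow (s := 1) (by norm_num) one_pos).mono_set
      (Ioi_subset_Ioi hc.le)
  refine (hmul.const_mul c⁻¹).mono' (by fun_prop) ?_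
  filter_upwards [ae_restrict_mem measurableSet_Ioi] with x hx
  exact abs_log_div_mul_exp_neg_le hc (le_of_lt hx)

lemma integrableOn_exp_neg_div {c : ℝ} (hc : 0 < c) :
    IntegrableOn (fun x => exp (-x) / x) (Ioi c) := by
  refine ((integrableOn_exp_neg_Ioi c).const_mul c⁻¹).mono'
    (by fun_prop : Measurable fun x : ℝ => exp (-x) / x).aestronglyMeasurable ?_
  filter_upwards [ae_restrict_mem measurableSet_Ioi] with x (hx : c < x)
  rw [norm_div, norm_of_nonneg (exp_pos _).le, norm_of_nonneg (hc.trans hx).le, div_eq_inv_mul]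
  gcongr

lemma tendsto_log_div_mul_exp_neg_atTop {c : ℝ} (hc : 0 < c) :
    Tendsto (fun x => log (x / c) * exp (-x)) atTop (𝓝 0) := by
  have hmul : Tendsto (fun x : ℝ => c⁻¹ * (x * exp (-x))) atTop (𝓝 0) := by
    simpa using (tendsto_pow_mul_exp_neg_atTop_nhds_zero 1).const_mul c⁻¹
  refine squeeze_zero_norm' ?_ hmul
  filter_upwards [eventually_ge_atTop c] with x hx
  exact abs_log_div_mul_exp_neg_le hc hx

theorem integral_Ioi_log_div_mul_exp_neg {c : ℝ} (hc : 0 < c) :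
    ∫ x in Ioi c, log (x / c) * exp (-x) = expIntegralE1 c := by
  have hu : ∀ x ∈ Ioi c, HasDerivAt (fun x => log (x / c)) x⁻¹ x := fun x (hx : c < x) =>
    ((hasDerivAt_id x).div_const c).log (div_pos (hc.trans hx) hc).ne' |>.congr_deriv (by
      rw [id]; field_simp)
  have hv : ∀ x ∈ Ioi c, HasDerivAt (fun x => -exp (-x)) (exp (-x)) x := fun x _ => by
    simpa using ((hasDerivAt_neg x).exp).fun_neg
  have hboundary : Tendsto (fun x => log (x / c) * -exp (-x)) (𝓝[>] c) (𝓝 0) := by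
    have : ContinuousAt (fun x => log (x / c) * -exp (-x)) c := by
      fun_prop (disch := positivity)
    simpa [hc.ne'] using this.tendsto.mono_left nhdsWithin_le_nhds
  have hinfty : Tendsto (fun x => log (x / c) * -exp (-x)) atTop (𝓝 0) := by
    simpa using (tendsto_log_div_mul_exp_neg_atTop hc).neg
  have hibp := integral_Ioi_mul_deriv_eq_deriv_mul hu hv
    (integrableOn_log_div_mul_exp_neg hc) ?_ hboundary hinfty
  · rw [hibp, expIntegralE1, sub_self, zero_sub, ← integral_neg]
    refine setIntegral_congr_fun measurableSet_Ioi fun x _ => ?_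
    simp only [mul_neg, neg_neg, div_eq_inv_mul]
  · simpa [Pi.mul_def, div_eq_inv_mul, mul_comm] using (integrableOn_exp_neg_div hc).neg

lemma setIntegral_Ioi_zero_log_max_div_one_mul {c : ℝ} (hc : 0 < c) (f : ℝ → ℝ) :
    ∫ x in Ioi 0, log (max (x / c) 1) * f x = ∫ x in Ioi c, log (x / c) * f x := by
  rw [setIntegral_eq_of_subset_of_forall_sdiff_eq_zero measurableSet_Ioi (Ioi_subset_Ioi hc.le)]
  · refine setIntegral_congr_fun measurableSet_Ioi fun x (hx : c < x) => ?_
    rw [max_eq_left ((one_le_div hc).mpr hx.le)]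
  · rintro x ⟨-, hx : ¬c < x⟩
    rw [max_eq_right ((div_le_one hc).mpr (not_lt.mp hx)), log_one, zero_mul]

theorem rayleigh_waterfilling_average_rate_general (α σ2 W ξ : ℝ)
    (hα : 0 < α) (hσ2 : 0 < σ2) (hξ : 0 < ξ) :
    ∫ g in Ioi (0 : ℝ),
        W * Real.logb 2 (1 + (α * g / σ2) * max (ξ - σ2 / (α * g)) 0) * Real.exp (-g)
      = (W / Real.log 2) * expIntegralE1 (σ2 / (α * ξ)) := by
  set c := σ2 / (α * ξ)
  have hc : 0 < c := by positivity
  calc ∫ g in Ioi (0 : ℝ),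
        W * Real.logb 2 (1 + (α * g / σ2) * max (ξ - σ2 / (α * g)) 0) * Real.exp (-g)
      = ∫ g in Ioi (0 : ℝ), W / log 2 * (log (max (g / c) 1) * exp (-g)) :=
        setIntegral_congr_fun measurableSet_Ioi fun g (hg : 0 < g) => by
          rw [one_add_mul_max_sub_div_eq_max hα hσ2 hg, logb]
          ring
    _ = W / log 2 * expIntegralE1 c := by
        rw [integral_const_mul, setIntegral_Ioi_zero_log_max_div_one_mul hc,
          integral_Ioi_log_div_mul_exp_neg hc]

/-- **Core computation of Corollary 1.** Under Rayleigh fading (density `e^{−g}` on `(0,∞)`),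
the average rate of the uncapped water-filling policy with water level `ξ` is
`(W/ln 2)·E₁(σ²/(α ξ))`. -/
theorem rayleigh_waterfilling_average_rate (α σ2 W ξ : ℝ)
    (hα : 0 < α) (hσ2 : 0 < σ2) (hW : 0 < W) (hξ : 0 < ξ) :
    ∫ g in Ioi (0 : ℝ),
        W * Real.logb 2 (1 + (α * g / σ2) * max (ξ - σ2 / (α * g)) 0) * Real.exp (-g)
      = (W / Real.log 2) * expIntegralE1 (σ2 / (α * ξ)) :=
  rayleigh_waterfilling_average_rate_general α σ2 W ξ hα hσ2 hξ
end

section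
/- Let α, σ², W > 0 and R̄ > 0. Let x > 0 be the unique solution of E₁(x) = (R̄·ln 2)/W and set ξ = (σ²/α)/x. Then the expected transmit power of the uncapped water-filling policy under Rayleigh fading satisfies ∫_0^∞ max(ξ − σ²/(α g), 0)·e^{−g} dg = (σ²/α)·( e^{−x}/x − (R̄/W)·ln 2 ). -/
set_option maxHeartbeats 1000000


open MeasureTheory Set

/-- **Closed form (18) in Proposition 2.** If `x > 0` solves `E₁(x) = R̄·ln 2/W` and
`ξ = (σ²/α)/x`, then the expected transmit power of the uncapped water-filling policy under
Rayleigh fading equals `(σ²/α)·(e^{−x}/x − (R̄/W)·ln 2)`. -/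
theorem rayleigh_expected_power_closed_form (α σ2 W Rbar x ξ : ℝ)
    (hα : 0 < α) (hσ2 : 0 < σ2) (hW : 0 < W) (hR : 0 < Rbar)
    (hx : 0 < x) (hE1 : expIntegralE1 x = Rbar * Real.log 2 / W)
    (hξ : ξ = (σ2 / α) / x) :
    ∫ g in Ioi (0 : ℝ), max (ξ - σ2 / (α * g)) 0 * Real.exp (-g)
      = (σ2 / α) * (Real.exp (-x) / x - (Rbar / W) * Real.log 2) := by
  set c := σ2 / α with hc
  have hcpos : 0 < c := div_pos hσ2 hα
  have hxi : ξ = c / x := hξ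
  -- restrict to Ioi x
  have hsub : Ioi x ⊆ Ioi (0 : ℝ) := fun g hg => lt_trans hx hg
  have h1 : (∫ g in Ioi (0 : ℝ), max (ξ - σ2 / (α * g)) 0 * Real.exp (-g))
      = ∫ g in Ioi x, max (ξ - σ2 / (α * g)) 0 * Real.exp (-g) := by
    refine setIntegral_eq_of_subset_of_forall_diff_eq_zero measurableSet_Ioi hsub ?_
    intro g hg
    obtain ⟨hg0, hgx⟩ := hg
    have hgx' : g ≤ x := not_lt.mp hgx
    have hgpos : (0:ℝ) < g := hg0
    have : ξ - σ2 / (α * g) ≤ 0 := by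
      rw [hxi, hc]
      have : σ2 / α / x ≤ σ2 / α / g := by
        apply div_le_div_of_nonneg_left (le_of_lt (div_pos hσ2 hα)) hgpos hgx'
      have hrw : σ2 / (α * g) = σ2 / α / g := by rw [div_div]
      linarith [hrw ▸ this]
    simp [max_eq_right this]
  rw [h1]
  have h2 : (∫ g in Ioi x, max (ξ - σ2 / (α * g)) 0 * Real.exp (-g))
      = ∫ g in Ioi x, (ξ * Real.exp (-g) - c * (Real.exp (-g) / g)) := by
    refine setIntegral_congr_fun measurableSet_Ioi fun g hg => ?_
    have hgpos : (0:ℝ) < g := lt_trans hx hg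
    have hle : x ≤ g := le_of_lt hg
    have hnn : 0 ≤ ξ - σ2 / (α * g) := by
      rw [hxi, hc]
      have : σ2 / α / g ≤ σ2 / α / x :=
        div_le_div_of_nonneg_left (le_of_lt (div_pos hσ2 hα)) hx hle
      have hrw : σ2 / (α * g) = σ2 / α / g := by rw [div_div]
      linarith [hrw ▸ this]
    rw [max_eq_left hnn]
    have hrw : σ2 / (α * g) = σ2 / α / g := by rw [div_div]
    rw [hrw]; ring
  rw [h2]
  -- integrability
  have hexp : IntegrableOn (fun g : ℝ => Real.exp (-g)) (Ioi x) := by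
    simpa using exp_neg_integrableOn_Ioi x one_pos
  have hE1int : IntegrableOn (fun g : ℝ => Real.exp (-g) / g) (Ioi x) := by
    refine Integrable.mono' (hexp.div_const x) ?_ ?_
    · exact ((Real.measurable_exp.comp measurable_neg).div measurable_id).aestronglyMeasurable
    · filter_upwards [ae_restrict_mem measurableSet_Ioi] with g hg
      have hgpos : (0:ℝ) < g := lt_trans hx hg
      rw [Real.norm_eq_abs, abs_of_nonneg (by positivity)]
      exact div_le_div_of_nonneg_left (Real.exp_pos _).le hx (le_of_lt hg)
  rw [integral_sub (hexp.const_mul ξ) (hE1int.const_mul c),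
    MeasureTheory.integral_const_mul, MeasureTheory.integral_const_mul, integral_exp_neg_Ioi]
  have : (∫ g in Ioi x, Real.exp (-g) / g) = Rbar * Real.log 2 / W := hE1
  rw [this, hxi]
  field_simp
end
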